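/- Let d be a positive integer, ν > 0 and D ≥ 0 real numbers, and set ν̃ = ν/d and w = (ν̃ + 1)/(ν̃ + D) = (ν + d)/(ν + dD). Let ψ(x) denote the derivative at x of y ↦ log Γ(y). Then (1/2) ψ((ν + d)/2) − (1/2) ψ(ν/2) − d/(2ν) − (1/2) log(1 + dD/ν) − ((ν + d)/2) ( 1/(ν + dD) − 1/ν ) ≤ (1/2) ( −w + log w + 1 + ((ν̃ + 2)/(ν̃ + 1)) · (1/ν) ). -/

import Mathlib

/-!
Plugging `ψ ((ν + d) / 2) ≤ log ((ν + d) / 2) - 1 / (ν + d)` and `ψ (ν / 2) ≥ log (ν / 2) - 2 / ν`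
into the left-hand side, the three logarithms combine into `log w` and what remains is a rational
identity.
-/

open Real Set Filter Topology

theorem log_one_add_inv_le {y : ℝ} (hy : 0 < y) :
    log (1 + y⁻¹) ≤ (y⁻¹ + (y + 1)⁻¹) / 2 := by
  set u : ℝ := 1 / (2 * y + 1) with hu
  have hu0 : 0 ≤ u := by positivity
  have hu1 : u ^ 2 < 1 := by
    rw [sq_lt_one_iff₀ hu0, hu, div_lt_one (by positivity)]; linarith
  -- Bounding `1 / (2k + 1)` by `1` in the series of `log (1 + y⁻¹)` in powers of `u`
  -- leaves a geometric series.
  have hgeom := (hasSum_geometric_of_lt_one (sq_nonneg u) hu1).mul_left (2 * u)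
  calc log (1 + y⁻¹) ≤ 2 * u * (1 - u ^ 2)⁻¹ := by
        refine hasSum_le (fun k => ?_) (hasSum_log_one_add_inv hy) hgeom
        have hk : 1 / (2 * (k : ℝ) + 1) ≤ 1 := by
          rw [div_le_one (by positivity)]; linarith [k.cast_nonneg (α := ℝ)]
        rw [pow_succ, pow_mul, mul_comm _ u, ← mul_assoc]
        gcongr
        linarith
    _ = (y⁻¹ + (y + 1)⁻¹) / 2 := by
        have h1 : 1 - u ^ 2 = 4 * y * (y + 1) / (2 * y + 1) ^ 2 := by
          rw [hu]; field_simp; ring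
        rw [h1, hu]
        field_simp
        ring

section LogGamma

local notation "ψ" => deriv (fun y : ℝ => log (Gamma y))

variable {x : ℝ}

theorem differentiableAt_log_Gamma (hx : 0 < x) :
    DifferentiableAt ℝ (fun y => log (Gamma y)) x := by
  refine (differentiableAt_Gamma ?_).log (Gamma_ne_zero ?_) <;>
    exact fun m => ((neg_nonpos.mpr m.cast_nonneg).trans_lt hx).ne'

theorem log_Gamma_add_one (hx : 0 < x) : log (Gamma (x + 1)) = log (Gamma x) + log x := by
  rw [Gamma_add_one hx.ne', log_mul hx.ne' (Gamma_pos_of_pos hx).ne', add_comm]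

theorem deriv_log_Gamma_add_one (hx : 0 < x) : ψ (x + 1) = ψ x + x⁻¹ := by
  rw [← deriv_comp_add_const, ← deriv_log,
    ← deriv_add (differentiableAt_log_Gamma hx) (differentiableAt_log hx.ne')]
  refine EventuallyEq.deriv_eq ?_
  filter_upwards [eventually_gt_nhds hx] with y hy
  exact log_Gamma_add_one hy

theorem convexOn_log_Gamma_fun : ConvexOn ℝ (Ioi 0) (fun y => log (Gamma y)) :=
  convexOn_log_Gamma

/- The slope of the convex function `log Γ` on `[x, x + 1]` is `log x`; it lies between
`ψ x` and `ψ (x + 1) = ψ x + x⁻¹`. -/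
theorem deriv_log_Gamma_le_log (hx : 0 < x) : ψ x ≤ log x := by
  have h := convexOn_log_Gamma_fun.deriv_le_slope (mem_Ioi.mpr hx)
    (mem_Ioi.mpr (by linarith : 0 < x + 1)) (lt_add_one x) (differentiableAt_log_Gamma hx)
  simpa [slope_def_field, log_Gamma_add_one hx] using h

theorem log_sub_inv_le_deriv_log_Gamma (hx : 0 < x) : log x - x⁻¹ ≤ ψ x := by
  have h := convexOn_log_Gamma_fun.slope_le_deriv (mem_Ioi.mpr hx)
    (mem_Ioi.mpr (by linarith : 0 < x + 1)) (lt_add_one x)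
    (differentiableAt_log_Gamma (by linarith))
  rw [slope_def_field, log_Gamma_add_one hx, deriv_log_Gamma_add_one hx, add_sub_cancel_left,
    add_sub_cancel_left, div_one] at h
  linarith

/- The gap `log y - (2y)⁻¹ - ψ y` decreases along `y ↦ y + 1` and is bounded below by
`-(2y)⁻¹ → 0`, so it is nonnegative. -/
theorem deriv_log_Gamma_le_log_sub_inv_two_mul (hx : 0 < x) : ψ x ≤ log x - (2 * x)⁻¹ := by
  let gap : ℝ → ℝ := fun y => log y - (2 * y)⁻¹ - ψ y
  have gap_add_one_le {y : ℝ} (hy : 0 < y) : gap (y + 1) ≤ gap y := by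
    have hlog : log (y + 1) - log y = log (1 + y⁻¹) := by
      rw [← log_div (by positivity) hy.ne', add_div, div_self hy.ne', one_div, add_comm]
    have := log_one_add_inv_le hy
    simp only [gap, deriv_log_Gamma_add_one hy, mul_inv]
    linarith
  have gap_antitone : Antitone fun n : ℕ => gap (x + n) :=
    antitone_nat_of_succ_le fun n => by
      simpa [add_assoc] using gap_add_one_le (by positivity : 0 < x + n)
  have gap_ge (n : ℕ) : -(2 * (x + n))⁻¹ ≤ gap x := by
    have := deriv_log_Gamma_le_log (by positivity : 0 < x + n)
    have := gap_antitone (Nat.zero_le n)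
    simp only [gap, Nat.cast_zero, add_zero] at *
    linarith
  have hlim : Tendsto (fun n : ℕ => -(2 * (x + n))⁻¹) atTop (𝓝 0) := by
    simpa using (tendsto_inv_atTop_zero.comp <| (tendsto_atTop_add_const_left _ x
      tendsto_natCast_atTop_atTop).const_mul_atTop two_pos).neg
  have := le_of_tendsto' hlim gap_ge
  simp only [gap] at this
  linarith

end LogGamma

/-- Surrogate upper bound (eq. (14) of the AdaTerm paper) on the gradient of the
Student's t log-likelihood with respect to the degrees of freedom `ν`, removing the
digamma function `ψ = (log Γ)'`. Here `ν̃ = ν/d` and `w = (ν̃+1)/(ν̃+D)`. -/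
theorem studentT_dof_gradient_upper_bound
    (d : ℕ) (hd : 1 ≤ d) (ν D : ℝ) (hν : 0 < ν) (hD : 0 ≤ D)
    (νt w : ℝ) (hνt : νt = ν / d) (hw : w = (νt + 1) / (νt + D)) :
    (1 / 2) * deriv (fun y : ℝ => Real.log (Real.Gamma y)) ((ν + d) / 2)
        - (1 / 2) * deriv (fun y : ℝ => Real.log (Real.Gamma y)) (ν / 2)
        - d / (2 * ν) - (1 / 2) * Real.log (1 + d * D / ν)
        - ((ν + d) / 2) * (1 / (ν + d * D) - 1 / ν)
      ≤ (1 / 2) * (-w + Real.log w + 1 + ((νt + 2) / (νt + 1)) * (1 / ν)) := by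
  have hd0 : (0 : ℝ) < d := by exact_mod_cast hd
  have hνdD : 0 < ν + d * D := by positivity
  have hψ_upper := deriv_log_Gamma_le_log_sub_inv_two_mul (by positivity : 0 < (ν + d) / 2)
  have hψ_lower := log_sub_inv_le_deriv_log_Gamma (by positivity : 0 < ν / 2)
  have hlog : log ((ν + d) / 2) - log (ν / 2) - log (1 + d * D / ν) = log w := by
    rw [← log_div (by positivity) (by positivity), ← log_div (by positivity) (by positivity)]
    congr 1
    rw [hw, hνt]
    field_simp
  have hrational : -(2 * ((ν + d) / 2))⁻¹ / 2 + (ν / 2)⁻¹ / 2 - d / (2 * ν)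
      - ((ν + d) / 2) * (1 / (ν + d * D) - 1 / ν)
      = (1 / 2) * (-w + 1 + ((νt + 2) / (νt + 1)) * (1 / ν)) := by
    rw [hw, hνt]
    field_simp
    ring
  linarith
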